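/- arXiv:2205.04563 — 3 statements merged into one kernel-verified Lean document; each statement's English description precedes it below -/
import Mathlib

section
/- For every w ∈ ℝⁿ, the difference K(w, −γ)/γ − max_{i=1,…,k} ( −μ_iᵀw + (γ/2) wᵀΣ_i w ) tends to 0 as γ → ∞. -/
open scoped BigOperators
open Matrix Filter

/-- Cumulant generating function of the portfolio return under the
Gaussian mixture model. -/
noncomputable def cgf {n k : ℕ} (π : Fin k → ℝ) (μ : Fin k → Fin n → ℝ)
    (S : Fin k → Matrix (Fin n) (Fin n) ℝ) (w : Fin n → ℝ) (t : ℝ) : ℝ :=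
  Real.log (∑ i, π i * Real.exp (t * (μ i ⬝ᵥ w) + t ^ 2 / 2 * (w ⬝ᵥ (S i).mulVec w)))

/-- High risk aversion limit: for every `w`, the difference
`K(w, −γ)/γ − max_i (−μ_iᵀw + (γ/2) wᵀΣ_i w)` tends to `0` as `γ → ∞`. -/
theorem cgf_high_risk_aversion_limit {n k : ℕ} (hk : 0 < k)
    (π : Fin k → ℝ) (hπ : ∀ i, 0 < π i) (hsum : ∑ i, π i = 1)
    (μ : Fin k → Fin n → ℝ)
    (S : Fin k → Matrix (Fin n) (Fin n) ℝ) (hS : ∀ i, (S i).PosSemidef)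
    (w : Fin n → ℝ) :
    Tendsto
      (fun γ : ℝ =>
        cgf π μ S w (-γ) / γ -
          Finset.univ.sup' (⟨⟨0, hk⟩, Finset.mem_univ _⟩ : (Finset.univ : Finset (Fin k)).Nonempty)
            (fun i => -(μ i ⬝ᵥ w) + γ / 2 * (w ⬝ᵥ (S i).mulVec w)))
      atTop (nhds 0) := by
  have hne : (Finset.univ : Finset (Fin k)).Nonempty := ⟨⟨0, hk⟩, Finset.mem_univ _⟩
  set A : ℝ → Fin k → ℝ := fun γ i => -(μ i ⬝ᵥ w) + γ / 2 * (w ⬝ᵥ (S i).mulVec w) with hA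
  set M : ℝ → ℝ := fun γ => Finset.univ.sup' hne (A γ) with hM
  set c : ℝ := Finset.univ.inf' hne π with hc
  have hcpos : 0 < c := by
    rw [hc, Finset.lt_inf'_iff]
    exact fun i _ => hπ i
  set L : ℝ → ℝ := fun γ => Real.log (∑ i, π i * Real.exp (γ * (A γ i - M γ))) with hL
  -- bounds on L for γ ≥ 0
  have hLle : ∀ γ : ℝ, 0 ≤ γ → L γ ≤ 0 := by
    intro γ hγ
    have hsum_le : (∑ i, π i * Real.exp (γ * (A γ i - M γ))) ≤ 1 := by
      rw [← hsum]
      apply Finset.sum_le_sum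
      intro i _
      have h1 : A γ i - M γ ≤ 0 := sub_nonpos.2 (Finset.le_sup' _ (Finset.mem_univ i))
      have : Real.exp (γ * (A γ i - M γ)) ≤ 1 :=
        Real.exp_le_one_iff.2 (mul_nonpos_of_nonneg_of_nonpos hγ h1)
      nlinarith [(hπ i).le]
    exact Real.log_nonpos
      (Finset.sum_nonneg fun i _ => mul_nonneg (hπ i).le (Real.exp_pos _).le) hsum_le
  have hLge : ∀ γ : ℝ, Real.log c ≤ L γ := by
    intro γ
    obtain ⟨j, _, hj⟩ := Finset.exists_mem_eq_sup' hne (A γ)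
    have hterm : c ≤ ∑ i, π i * Real.exp (γ * (A γ i - M γ)) := by
      have h0 : π j * Real.exp (γ * (A γ j - M γ)) = π j := by
        rw [hM]
        simp [hj.symm]
      calc c ≤ π j := Finset.inf'_le _ (Finset.mem_univ j)
        _ = π j * Real.exp (γ * (A γ j - M γ)) := h0.symm
        _ ≤ ∑ i, π i * Real.exp (γ * (A γ i - M γ)) :=
          Finset.single_le_sum (f := fun i => π i * Real.exp (γ * (A γ i - M γ)))
            (fun i _ => mul_nonneg (hπ i).le (Real.exp_pos _).le) (Finset.mem_univ j)
    exact Real.log_le_log hcpos hterm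
  -- the key identity for γ > 0
  have hkey : ∀ γ : ℝ, 0 < γ →
      cgf π μ S w (-γ) / γ - M γ = L γ / γ := by
    intro γ hγ
    have hS0 : (0:ℝ) < ∑ i, π i * Real.exp ((-γ) * (μ i ⬝ᵥ w) + (-γ) ^ 2 / 2 * (w ⬝ᵥ (S i).mulVec w)) :=
      Finset.sum_pos (fun i _ => mul_pos (hπ i) (Real.exp_pos _)) hne
    have hLid : L γ = cgf π μ S w (-γ) - γ * M γ := by
      have hterm : ∀ i, π i * Real.exp (γ * (A γ i - M γ)) =
          π i * Real.exp ((-γ) * (μ i ⬝ᵥ w) + (-γ) ^ 2 / 2 * (w ⬝ᵥ (S i).mulVec w)) *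
            Real.exp (-(γ * M γ)) := by
        intro i
        rw [mul_assoc, ← Real.exp_add]
        congr 1
        rw [hA]; ring
      rw [hL]
      simp_rw [hterm]
      rw [← Finset.sum_mul, Real.log_mul (ne_of_gt hS0) (Real.exp_ne_zero _), Real.log_exp, cgf]
      ring
    rw [hLid]
    field_simp
  -- squeeze
  apply tendsto_of_tendsto_of_tendsto_of_le_of_le'
    (g := fun γ : ℝ => Real.log c / γ) (h := fun _ => (0:ℝ))
  · exact tendsto_const_nhds.div_atTop tendsto_id
  · exact tendsto_const_nhds
  · filter_upwards [eventually_gt_atTop (0:ℝ)] with γ hγ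
    rw [hkey γ hγ]
    exact (div_le_div_iff_of_pos_right hγ).2 (hLge γ)
  · filter_upwards [eventually_gt_atTop (0:ℝ)] with γ hγ
    rw [hkey γ hγ]
    exact div_nonpos_of_nonpos_of_nonneg (hLle γ hγ.le) hγ.le
end

section
/- For any α ∈ (0,1), the function (w, δ) ↦ δ·K(w/δ, −1) − δ log α, defined on ℝⁿ × (0, ∞), is jointly convex in (w, δ). -/
open scoped BigOperators
open Matrix

/-! For fixed `t` every exponent `t μᵢᵀw + (t²/2) wᵀΣᵢw` is convex in `w`, being linear plus a
positive semidefinite quadratic form. Hölder's inequality `∑ uᵢ^a vᵢ^b ≤ (∑ uᵢ)^a (∑ vᵢ)^b` makes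
`log ∑ πᵢ exp(gᵢ)` convex whenever every `gᵢ` is, so `w ↦ K(w, t)` is convex; the perspective
`(w, δ) ↦ δ f(w/δ)` of a convex function `f` is jointly convex on `δ > 0`, applied here to
`f = K(·, −1) − log α`. -/

open Set

theorem Real.sum_rpow_mul_rpow_le {ι : Type*} (s : Finset ι) {u v : ι → ℝ}
    (hu : ∀ i ∈ s, 0 ≤ u i) (hv : ∀ i ∈ s, 0 ≤ v i) {a b : ℝ} (ha : 0 ≤ a) (hb : 0 ≤ b)
    (hab : a + b = 1) :
    ∑ i ∈ s, u i ^ a * v i ^ b ≤ (∑ i ∈ s, u i) ^ a * (∑ i ∈ s, v i) ^ b := by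
  rcases ha.eq_or_lt with rfl | ha
  · obtain rfl : b = 1 := by linarith
    simp
  rcases hb.eq_or_lt with rfl | hb
  · obtain rfl : a = 1 := by linarith
    simp
  have hpq := Real.HolderConjugate.inv_inv ha hb hab
  convert Real.inner_le_Lp_mul_Lq_of_nonneg s hpq
    (fun i hi => rpow_nonneg (hu i hi) a) (fun i hi => rpow_nonneg (hv i hi) b) using 3
  · exact Finset.sum_congr rfl fun i hi => (rpow_rpow_inv (hu i hi) ha.ne').symm
  · rw [one_div, inv_inv]
  · exact Finset.sum_congr rfl fun i hi => (rpow_rpow_inv (hv i hi) hb.ne').symm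
  · rw [one_div, inv_inv]

theorem Matrix.PosSemidef.convexOn_dotProduct_mulVec {m : Type*} [Fintype m]
    {S : Matrix m m ℝ} (hS : S.PosSemidef) :
    ConvexOn ℝ univ (fun x : m → ℝ => x ⬝ᵥ S *ᵥ x) := by
  refine ⟨convex_univ, fun x _ y _ a b ha hb hab => ?_⟩
  have hxy : 0 ≤ (x - y) ⬝ᵥ S *ᵥ (x - y) := by
    simpa using hS.dotProduct_mulVec_nonneg (x - y)
  have key : a * (x ⬝ᵥ S *ᵥ x) + b * (y ⬝ᵥ S *ᵥ y) - (a • x + b • y) ⬝ᵥ S *ᵥ (a • x + b • y) =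
      a * b * ((x - y) ⬝ᵥ S *ᵥ (x - y)) := by
    simp only [mulVec_add, mulVec_sub, mulVec_smul, add_dotProduct, sub_dotProduct,
      dotProduct_add, dotProduct_sub, smul_dotProduct, dotProduct_smul, smul_eq_mul]
    obtain rfl : b = 1 - a := by linarith
    ring
  simp only [smul_eq_mul]
  nlinarith [mul_nonneg (mul_nonneg ha hb) hxy]

theorem ConvexOn.perspective {E : Type*} [AddCommGroup E] [Module ℝ E] {f : E → ℝ}
    (hf : ConvexOn ℝ univ f) :
    ConvexOn ℝ (univ ×ˢ Ioi 0) (fun p : E × ℝ => p.2 * f (p.2⁻¹ • p.1)) := by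
  refine ⟨convex_univ.prod (convex_Ioi 0), ?_⟩
  rintro ⟨x, δ⟩ ⟨-, hδ : 0 < δ⟩ ⟨y, ε⟩ ⟨-, hε : 0 < ε⟩ a b ha hb hab
  set σ := a * δ + b * ε with hσ_def
  have hσ : 0 < σ := by
    rcases ha.eq_or_lt with rfl | ha
    · obtain rfl : b = 1 := by linarith
      simpa [hσ_def] using hε
    · positivity
  have hcomb : σ⁻¹ • (a • x + b • y)
      = (a * δ / σ) • (δ⁻¹ • x) + (b * ε / σ) • (ε⁻¹ • y) := by
    simp only [smul_smul, smul_add]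
    congr 2 <;> field_simp
  have hweights : a * δ / σ + b * ε / σ = 1 := by field_simp; exact hσ_def.symm
  have hf_comb :=
    hf.2 (mem_univ (δ⁻¹ • x)) (mem_univ (ε⁻¹ • y)) (by positivity) (by positivity) hweights
  rw [← hcomb, smul_eq_mul, smul_eq_mul] at hf_comb
  simp only [Prod.smul_mk, Prod.mk_add_mk, smul_eq_mul, ← hσ_def]
  calc σ * f (σ⁻¹ • (a • x + b • y))
      ≤ σ * (a * δ / σ * f (δ⁻¹ • x) + b * ε / σ * f (ε⁻¹ • y)) :=
        mul_le_mul_of_nonneg_left hf_comb hσ.le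
    _ = a * (δ * f (δ⁻¹ • x)) + b * (ε * f (ε⁻¹ • y)) := by field_simp

theorem ConvexOn.log_sum_mul_exp {ι E : Type*} [Fintype ι] [Nonempty ι] [AddCommGroup E]
    [Module ℝ E] {s : Set E} {π : ι → ℝ} (hπ : ∀ i, 0 < π i) {g : ι → E → ℝ}
    (hg : ∀ i, ConvexOn ℝ s (g i)) (hs : Convex ℝ s) :
    ConvexOn ℝ s (fun x => Real.log (∑ i, π i * Real.exp (g i x))) := by
  have hterm_pos : ∀ i z, 0 < π i * Real.exp z := fun i z => mul_pos (hπ i) (Real.exp_pos z)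
  have hpos : ∀ x, 0 < ∑ i, π i * Real.exp (g i x) := fun x =>
    Finset.sum_pos (fun i _ => hterm_pos i _) Finset.univ_nonempty
  refine ⟨hs, fun x hx y hy a b ha hb hab => ?_⟩
  have hterm : ∀ i, π i * Real.exp (g i (a • x + b • y))
      ≤ (π i * Real.exp (g i x)) ^ a * (π i * Real.exp (g i y)) ^ b := fun i => by
    have hπi := (hπ i).le
    rw [Real.mul_rpow hπi (Real.exp_pos _).le, Real.mul_rpow hπi (Real.exp_pos _).le,
      ← Real.exp_mul, ← Real.exp_mul, mul_mul_mul_comm, ← Real.rpow_add (hπ i), hab,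
      Real.rpow_one, ← Real.exp_add]
    gcongr
    simpa [mul_comm] using (hg i).2 hx hy ha hb hab
  set P := ∑ i, π i * Real.exp (g i x)
  set Q := ∑ i, π i * Real.exp (g i y)
  calc Real.log (∑ i, π i * Real.exp (g i (a • x + b • y)))
      ≤ Real.log (P ^ a * Q ^ b) := by
        gcongr
        · exact hpos _
        · exact (Finset.sum_le_sum fun i _ => hterm i).trans
            (Real.sum_rpow_mul_rpow_le _ (fun i _ => (hterm_pos i _).le)
              (fun i _ => (hterm_pos i _).le) ha hb hab)
    _ = a • Real.log P + b • Real.log Q := by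
        rw [Real.log_mul (Real.rpow_pos_of_pos (hpos x) a).ne'
          (Real.rpow_pos_of_pos (hpos y) b).ne', Real.log_rpow (hpos x), Real.log_rpow (hpos y),
          smul_eq_mul, smul_eq_mul]

theorem convexOn_cgf {n k : ℕ} (hk : 0 < k) {π : Fin k → ℝ} (hπ : ∀ i, 0 < π i)
    (μ : Fin k → Fin n → ℝ) {S : Fin k → Matrix (Fin n) (Fin n) ℝ}
    (hS : ∀ i, (S i).PosSemidef) (t : ℝ) : ConvexOn ℝ univ (fun w => cgf π μ S w t) := by
  have : Nonempty (Fin k) := ⟨⟨0, hk⟩⟩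
  refine ConvexOn.log_sum_mul_exp hπ (fun i => ?_) convex_univ
  exact ((t • dotProductBilin ℝ ℝ (μ i)).convexOn convex_univ).add
    ((hS i).convexOn_dotProduct_mulVec.smul (by positivity))

theorem evar_objective_convex_general {n k : ℕ} (hk : 0 < k)
    (π : Fin k → ℝ) (hπ : ∀ i, 0 < π i)
    (μ : Fin k → Fin n → ℝ)
    (S : Fin k → Matrix (Fin n) (Fin n) ℝ) (hS : ∀ i, (S i).PosSemidef)
    (α : ℝ) :
    ConvexOn ℝ ((Set.univ : Set (Fin n → ℝ)) ×ˢ Set.Ioi (0 : ℝ))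
      (fun p : (Fin n → ℝ) × ℝ =>
        p.2 * cgf π μ S (p.2⁻¹ • p.1) (-1) - p.2 * Real.log α) := by
  convert ((convexOn_cgf hk hπ μ hS (-1)).add_const (-Real.log α)).perspective using 2 with p
  rw [Pi.add_apply]
  ring

/-- The EVaR objective `(w, δ) ↦ δ·K(w/δ, −1) − δ log α` is jointly convex
on `ℝⁿ × (0, ∞)`. -/
theorem evar_objective_convex {n k : ℕ} (hk : 0 < k)
    (π : Fin k → ℝ) (hπ : ∀ i, 0 < π i) (hsum : ∑ i, π i = 1)
    (μ : Fin k → Fin n → ℝ)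
    (S : Fin k → Matrix (Fin n) (Fin n) ℝ) (hS : ∀ i, (S i).PosSemidef)
    (α : ℝ) (hα : α ∈ Set.Ioo (0 : ℝ) 1) :
    ConvexOn ℝ ((Set.univ : Set (Fin n → ℝ)) ×ˢ Set.Ioi (0 : ℝ))
      (fun p : (Fin n → ℝ) × ℝ =>
        p.2 * cgf π μ S (p.2⁻¹ • p.1) (-1) - p.2 * Real.log α) :=
  evar_objective_convex_general hk π hπ μ S hS α
end

section
/- Let 𝒲 ⊆ ℝⁿ and α ∈ (0,1). Suppose (w*, λ*) with λ* > 0 minimizes the EVaR objective (K(w, −λ) − log α)/λ over all (w, λ) with w ∈ 𝒲 and λ > 0. Then w* minimizes K(w, −λ*) over w ∈ 𝒲; that is, w* is optimal for the exponential utility problem with risk aversion parameter γ = λ*. -/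
open scoped BigOperators
open Matrix

/-- If `(w*, λ*)` with `λ* > 0` minimizes the EVaR objective
`(K(w,−λ) − log α)/λ` over `w ∈ 𝒲`, `λ > 0`, then `w*` minimizes `K(w, −λ*)`
over `w ∈ 𝒲`, i.e. `w*` is optimal for the exponential utility problem with
risk aversion `γ = λ*`. -/
theorem evar_minimizer_is_egm_optimal {n k : ℕ} (hk : 0 < k)
    (π : Fin k → ℝ) (hπ : ∀ i, 0 < π i) (hsum : ∑ i, π i = 1)
    (μ : Fin k → Fin n → ℝ)
    (S : Fin k → Matrix (Fin n) (Fin n) ℝ) (hS : ∀ i, (S i).PosSemidef)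
    (W : Set (Fin n → ℝ)) (α : ℝ) (hα : α ∈ Set.Ioo (0 : ℝ) 1)
    (wstar : Fin n → ℝ) (lamstar : ℝ) (hw : wstar ∈ W) (hlam : 0 < lamstar)
    (hopt : ∀ w ∈ W, ∀ lam > (0 : ℝ),
      (cgf π μ S wstar (-lamstar) - Real.log α) / lamstar ≤
        (cgf π μ S w (-lam) - Real.log α) / lam) :
    ∀ w ∈ W, cgf π μ S wstar (-lamstar) ≤ cgf π μ S w (-lamstar) := by
  intro w hwW
  have h := hopt w hwW lamstar hlam
  have := (div_le_div_iff_of_pos_right hlam).mp h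
  linarith
end
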